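/- Under the standing assumption, a function H* ∈ 𝒜 satisfies J_{a*}(H*) = v(a*) (i.e., H* is an optimal retention) if and only if for every H ∈ 𝒜 one has ∫_{(0,∞)} H(z)·(a*·H*(z) + 1) dμ_F(z) − (1+θ)·∫_{(0,∞)} H(z) dμ_F̂(z) ≥ ∫_{(0,∞)} H*(z)·(a*·H*(z) + 1) dμ_F(z) − (1+θ)·∫_{(0,∞)} H*(z) dμ_F̂(z), where the integrals of nonnegative functions are taken in [0,+∞] and the right-hand side is finite. -/

import Mathlib

open MeasureTheory Set Filter Topology
open scoped ENNReal

noncomputable section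

/-- The admissible set 𝒜: functions `H : [0,∞) → [0,∞)` with `H 0 = 0` that are
nondecreasing and 1-Lipschitz (extended to `ℝ`, with the conditions imposed on `[0,∞)`). -/
def Adm : Set (ℝ → ℝ) :=
  {H | H 0 = 0 ∧ (∀ z, 0 ≤ z → 0 ≤ H z) ∧ MonotoneOn H (Set.Ici 0) ∧
    LipschitzOnWith 1 H (Set.Ici 0)}

/-- The objective functional
`J_a(H) = ∫_{(0,∞)} ((a/2)·H² + H) dμ_F − (1+θ)·∫_{(0,∞)} H dμ_F̂`, valued in `EReal`. -/
def Jfun (μF μFhat : Measure ℝ) (θ a : ℝ) (H : ℝ → ℝ) : EReal :=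
  ((∫⁻ z in Set.Ioi (0:ℝ), ENNReal.ofReal (a / 2 * H z ^ 2 + H z) ∂μF : ℝ≥0∞) : EReal)
    - ((ENNReal.ofReal (1 + θ) * ∫⁻ z in Set.Ioi (0:ℝ), ENNReal.ofReal (H z) ∂μFhat : ℝ≥0∞) : EReal)

/-- `v(a) = inf_{H ∈ 𝒜} J_a(H)`. -/
def vfun (μF μFhat : Measure ℝ) (θ : ℝ) (a : ℝ) : EReal :=
  ⨅ H ∈ Adm, Jfun μF μFhat θ a H

/-
`J_a` is convex on the convex set `𝒜`, and the variational inequality is its first-order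
condition at `H*`. Sufficiency: the integrand `(a/2) H² + H` dominates pointwise its
linearization `(a/2) H*² + H* + (H - H*) (a H* + 1)`. Necessity: along the segment,
`J_a(H* + t (H - H*)) = J_a(H*) + t D + t² (a/2) ∫ (H - H*)² dμ_F`, where `D` is the difference
of the two sides of the variational inequality, so `D ≥ 0` follows by letting `t → 0⁺` as soon as
the quadratic term is finite. It is finite for `min H n` (when the right-hand side is finite,
so is `∫ H dμ_F`), and the inequality passes to `n → ∞` by monotone convergence.
All integrals stay in `[0, ∞]`; the finite premium terms are moved across, so no `∞ - ∞` occurs.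
-/

theorem EReal.coe_ennreal_sub_le_coe_ennreal_sub_iff {a b c d : ℝ≥0∞} (hb : b ≠ ⊤) (hd : d ≠ ⊤) :
    (a : EReal) - b ≤ (c : EReal) - d ↔ a + d ≤ c + b := by
  have hb' : (b : EReal) ≠ ⊤ := EReal.coe_ennreal_eq_top_iff.not.2 hb
  have hd' : (d : EReal) ≠ ⊤ := EReal.coe_ennreal_eq_top_iff.not.2 hd
  rw [EReal.le_sub_iff_add_le (.inl (EReal.coe_ennreal_ne_bot _)) (.inl hd'), sub_eq_add_neg,
    add_right_comm, ← sub_eq_add_neg,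
    EReal.sub_le_iff_le_add (.inl (EReal.coe_ennreal_ne_bot _)) (.inl hb'),
    ← EReal.coe_ennreal_add, ← EReal.coe_ennreal_add, EReal.coe_ennreal_le_coe_ennreal_iff]

theorem ENNReal.le_of_forall_mul_le_mul_add_sq_mul {x y q : ℝ≥0∞} (hq : q ≠ ⊤)
    (h : ∀ t ∈ Ioc (0 : ℝ) 1,
      ENNReal.ofReal t * x ≤ ENNReal.ofReal t * y + ENNReal.ofReal t ^ 2 * q) :
    x ≤ y := by
  have hlim : Tendsto (fun t => y + ENNReal.ofReal t * q) (𝓝[>] 0) (𝓝 y) := by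
    have h0 : Tendsto ENNReal.ofReal (𝓝[>] 0) (𝓝 0) := by
      simpa using (ENNReal.continuous_ofReal.tendsto 0).mono_left nhdsWithin_le_nhds
    simpa using (ENNReal.Tendsto.mul_const h0 (.inr hq)).const_add y
  refine ge_of_tendsto hlim (eventually_of_mem (Ioc_mem_nhdsGT one_pos) fun t ht => ?_)
  have ht0 : ENNReal.ofReal t ≠ 0 := ENNReal.ofReal_ne_zero_iff.2 ht.1
  rw [← ENNReal.mul_le_mul_iff_right ht0 ENNReal.ofReal_ne_top, mul_add, ← mul_assoc, ← pow_two]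
  exact h t ht

namespace Adm

variable {H : ℝ → ℝ}

lemma nonneg (hH : H ∈ Adm) {z : ℝ} (hz : 0 ≤ z) : 0 ≤ H z := hH.2.1 z hz

lemma le_self (hH : H ∈ Adm) {z : ℝ} (hz : 0 ≤ z) : H z ≤ z := by
  have h := hH.2.2.2.dist_le_mul z hz 0 self_mem_Ici
  rwa [hH.1, NNReal.coe_one, one_mul, Real.dist_eq, Real.dist_eq, sub_zero, sub_zero,
    abs_of_nonneg (Adm.nonneg hH hz), abs_of_nonneg hz] at h

lemma min_const (hH : H ∈ Adm) {n : ℝ} (hn : 0 ≤ n) : (fun z => min (H z) n) ∈ Adm :=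
  ⟨by simp [hH.1, hn], fun _ hz => le_min (Adm.nonneg hH hz) hn,
    hH.2.2.1.min monotoneOn_const,
    lipschitzOnWith_iff_restrict.2 ((lipschitzOnWith_iff_restrict.1 hH.2.2.2).min_const n)⟩

lemma aemeasurable (hH : H ∈ Adm) (μ : Measure ℝ) : AEMeasurable H (μ.restrict (Ioi 0)) :=
  (aemeasurable_restrict_of_monotoneOn measurableSet_Ici hH.2.2.1).mono_measure
    (Measure.restrict_mono Ioi_subset_Ici_self le_rfl)

end Adm

lemma zero_mem_Adm : (0 : ℝ → ℝ) ∈ Adm :=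
  ⟨rfl, fun _ _ => le_rfl, monotoneOn_const,
    (LipschitzWith.const (0 : ℝ)).lipschitzOnWith.weaken zero_le_one⟩

lemma convex_Adm : Convex ℝ Adm := by
  intro H₁ h₁ H₂ h₂ s t hs ht hst
  refine ⟨by simp [h₁.1, h₂.1], fun z hz => ?_, fun x hx y hy hxy => ?_, ?_⟩
  · have := Adm.nonneg h₁ hz
    have := Adm.nonneg h₂ hz
    simp only [Pi.add_apply, Pi.smul_apply, smul_eq_mul]
    positivity
  · simp only [Pi.add_apply, Pi.smul_apply, smul_eq_mul]
    gcongr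
    exacts [h₁.2.2.1 hx hy hxy, h₂.2.2.1 hx hy hxy]
  · refine LipschitzOnWith.of_dist_le_mul fun x hx y hy => ?_
    have d₁ := h₁.2.2.2.dist_le_mul x hx y hy
    have d₂ := h₂.2.2.2.dist_le_mul x hx y hy
    simp only [Real.dist_eq, NNReal.coe_one, one_mul, Pi.add_apply, Pi.smul_apply,
      smul_eq_mul] at d₁ d₂ ⊢
    calc |s * H₁ x + t * H₂ x - (s * H₁ y + t * H₂ y)|
        = |s * (H₁ x - H₁ y) + t * (H₂ x - H₂ y)| := by ring_nf
      _ ≤ s * |H₁ x - H₁ y| + t * |H₂ x - H₂ y| := by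
        refine (abs_add_le _ _).trans ?_
        rw [abs_mul, abs_mul, abs_of_nonneg hs, abs_of_nonneg ht]
      _ ≤ s * |x - y| + t * |x - y| := by gcongr
      _ = |x - y| := by rw [← add_mul, hst, one_mul]

def quadCost (μ : Measure ℝ) (a : ℝ) (H : ℝ → ℝ) : ℝ≥0∞ :=
  ∫⁻ z in Ioi 0, ENNReal.ofReal (a / 2 * H z ^ 2 + H z) ∂μ

def premium (ν : Measure ℝ) (θ : ℝ) (H : ℝ → ℝ) : ℝ≥0∞ :=
  ENNReal.ofReal (1 + θ) * ∫⁻ z in Ioi 0, ENNReal.ofReal (H z) ∂ν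

/-- The derivative of `quadCost μ a` at `Hstar`, in the direction `H`. -/
def marginalCost (μ : Measure ℝ) (a : ℝ) (Hstar H : ℝ → ℝ) : ℝ≥0∞ :=
  ∫⁻ z in Ioi 0, ENNReal.ofReal (H z * (a * Hstar z + 1)) ∂μ

def quadGap (μ : Measure ℝ) (a : ℝ) (Hstar H : ℝ → ℝ) : ℝ≥0∞ :=
  ∫⁻ z in Ioi 0, ENNReal.ofReal (a / 2 * (H z - Hstar z) ^ 2) ∂μ

section Functional

variable {μ ν : Measure ℝ} {θ a : ℝ} {u w : ℝ → ℝ}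

lemma premium_ne_top (hν : premium ν θ (fun z => z) < ⊤) (hw : w ∈ Adm) : premium ν θ w ≠ ⊤ :=
  (lt_of_le_of_lt (mul_le_mul_right (setLIntegral_mono' measurableSet_Ioi fun _ hz =>
    ENNReal.ofReal_le_ofReal (Adm.le_self hw (le_of_lt hz))) _) hν).ne

lemma Jfun_le_Jfun_iff (hν : premium ν θ (fun z => z) < ⊤) (hu : u ∈ Adm) (hw : w ∈ Adm) :
    Jfun μ ν θ a u ≤ Jfun μ ν θ a w ↔
      quadCost μ a u + premium ν θ w ≤ quadCost μ a w + premium ν θ u :=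
  EReal.coe_ennreal_sub_le_coe_ennreal_sub_iff (premium_ne_top hν hu) (premium_ne_top hν hw)

lemma Jfun_eq_vfun_iff (hu : u ∈ Adm) :
    Jfun μ ν θ a u = vfun μ ν θ a ↔ IsMinOn (Jfun μ ν θ a) Adm u := by
  rw [isMinOn_iff]
  exact ⟨fun h w hw => h ▸ iInf₂_le w hw, fun h => le_antisymm (le_iInf₂ h) (iInf₂_le u hu)⟩

lemma quadCost_add_marginalCost_le (ha : 0 ≤ a) (hu : u ∈ Adm) (hw : w ∈ Adm) :
    quadCost μ a u + marginalCost μ a u w ≤ quadCost μ a w + marginalCost μ a u u := by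
  have hmeas := Adm.aemeasurable hw μ
  calc quadCost μ a u + marginalCost μ a u w
      ≤ ∫⁻ z in Ioi 0, ENNReal.ofReal (a / 2 * u z ^ 2 + u z)
          + ENNReal.ofReal (w z * (a * u z + 1)) ∂μ := le_lintegral_add _ _
    _ ≤ ∫⁻ z in Ioi 0, ENNReal.ofReal (a / 2 * w z ^ 2 + w z)
          + ENNReal.ofReal (u z * (a * u z + 1)) ∂μ := by
      refine setLIntegral_mono' measurableSet_Ioi fun z hz => ?_
      have hu0 := Adm.nonneg hu (le_of_lt hz)
      have hw0 := Adm.nonneg hw (le_of_lt hz)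
      rw [← ENNReal.ofReal_add (by positivity) (by positivity),
        ← ENNReal.ofReal_add (by positivity) (by positivity)]
      exact ENNReal.ofReal_le_ofReal (by nlinarith [mul_nonneg ha (sq_nonneg (w z - u z))])
    _ = quadCost μ a w + marginalCost μ a u u := lintegral_add_left' (by fun_prop) _

lemma isMinOn_of_marginalCost_add_premium_le (ha : 0 ≤ a) (hν : premium ν θ (fun z => z) < ⊤)
    (hu : u ∈ Adm) (hT : marginalCost μ a u u ≠ ⊤)
    (hvi : ∀ w ∈ Adm, marginalCost μ a u u + premium ν θ w ≤ marginalCost μ a u w + premium ν θ u) :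
    IsMinOn (Jfun μ ν θ a) Adm u := by
  refine isMinOn_iff.2 fun w hw => (Jfun_le_Jfun_iff hν hu hw).2 ?_
  have hconv := quadCost_add_marginalCost_le (μ := μ) ha hu hw
  rcases eq_or_ne (quadCost μ a w) ⊤ with hSw | hSw
  · simp [hSw]
  have hTT : marginalCost μ a u u + marginalCost μ a u w ≠ ⊤ :=
    ENNReal.add_ne_top.2 ⟨hT, ne_top_of_le_ne_top (ENNReal.add_ne_top.2 ⟨hSw, hT⟩)
      (le_add_self.trans hconv)⟩
  rw [← ENNReal.add_le_add_iff_right hTT]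
  calc quadCost μ a u + premium ν θ w + (marginalCost μ a u u + marginalCost μ a u w)
      = (quadCost μ a u + marginalCost μ a u w) + (marginalCost μ a u u + premium ν θ w) := by ring
    _ ≤ (quadCost μ a w + marginalCost μ a u u) + (marginalCost μ a u w + premium ν θ u) :=
      add_le_add hconv (hvi w hw)
    _ = quadCost μ a w + premium ν θ u + (marginalCost μ a u u + marginalCost μ a u w) := by ring

lemma marginalCost_self_le (hu : u ∈ Adm) :
    marginalCost μ a u u ≤ 2 * quadCost μ a u := by
  rw [quadCost, ← lintegral_const_mul' _ _ (by norm_num)]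
  refine setLIntegral_mono' measurableSet_Ioi fun z hz => ?_
  have := Adm.nonneg hu (le_of_lt hz)
  rw [← ENNReal.ofReal_ofNat 2, ← ENNReal.ofReal_mul zero_le_two]
  exact ENNReal.ofReal_le_ofReal (by nlinarith)

lemma quadCost_ne_top_of_isMinOn (hν : premium ν θ (fun z => z) < ⊤) (hu : u ∈ Adm)
    (hmin : IsMinOn (Jfun μ ν θ a) Adm u) : quadCost μ a u ≠ ⊤ := by
  have h := (Jfun_le_Jfun_iff hν hu zero_mem_Adm).1 (isMinOn_iff.1 hmin 0 zero_mem_Adm)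
  have h0 : quadCost μ a 0 = 0 := by simp [quadCost]
  rw [h0, zero_add] at h
  exact ne_top_of_le_ne_top (premium_ne_top hν hu) (le_self_add.trans h)

lemma quadCost_add_smul_sub (ha : 0 ≤ a) (hu : u ∈ Adm) (hw : w ∈ Adm) {t : ℝ}
    (ht : t ∈ Icc (0 : ℝ) 1) :
    quadCost μ a (u + t • (w - u)) + ENNReal.ofReal t * marginalCost μ a u u =
      quadCost μ a u + ENNReal.ofReal t * marginalCost μ a u w
        + ENNReal.ofReal t ^ 2 * quadGap μ a u w := by
  have hmu := Adm.aemeasurable hu μ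
  have hmw := Adm.aemeasurable hw μ
  simp only [quadCost, marginalCost, quadGap]
  rw [← lintegral_const_mul' _ _ ENNReal.ofReal_ne_top,
    ← lintegral_const_mul' _ _ ENNReal.ofReal_ne_top,
    ← lintegral_const_mul' _ _ (ENNReal.pow_ne_top ENNReal.ofReal_ne_top),
    ← lintegral_add_left' (by fun_prop), ← lintegral_add_left' (by fun_prop),
    ← lintegral_add_left' (by fun_prop)]
  refine setLIntegral_congr_fun measurableSet_Ioi fun z hz => ?_
  have hu0 := Adm.nonneg hu (le_of_lt hz)
  have hw0 := Adm.nonneg hw (le_of_lt hz)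
  have hK : 0 ≤ u z + t * (w z - u z) := by nlinarith [ht.1, ht.2]
  obtain ⟨ht0, -⟩ := ht
  simp only [Pi.add_apply, Pi.smul_apply, Pi.sub_apply, smul_eq_mul]
  rw [← ENNReal.ofReal_mul ht0, ← ENNReal.ofReal_mul ht0, ← ENNReal.ofReal_pow ht0,
    ← ENNReal.ofReal_mul (by positivity), ← ENNReal.ofReal_add (by positivity) (by positivity),
    ← ENNReal.ofReal_add (by positivity) (by positivity),
    ← ENNReal.ofReal_add (by positivity) (by positivity)]
  congr 1; ring

lemma premium_add_smul_sub (hu : u ∈ Adm) (hw : w ∈ Adm) {t : ℝ} (ht : t ∈ Icc (0 : ℝ) 1) :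
    premium ν θ (u + t • (w - u)) + ENNReal.ofReal t * premium ν θ u =
      premium ν θ u + ENNReal.ofReal t * premium ν θ w := by
  have hmu := Adm.aemeasurable hu ν
  have hmw := Adm.aemeasurable hw ν
  simp only [premium, mul_left_comm (ENNReal.ofReal t), ← mul_add]
  congr 1
  rw [← lintegral_const_mul' _ _ ENNReal.ofReal_ne_top,
    ← lintegral_const_mul' _ _ ENNReal.ofReal_ne_top,
    ← lintegral_add_left' (by fun_prop), ← lintegral_add_left' (by fun_prop)]
  refine setLIntegral_congr_fun measurableSet_Ioi fun z hz => ?_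
  have hu0 := Adm.nonneg hu (le_of_lt hz)
  have hw0 := Adm.nonneg hw (le_of_lt hz)
  have hK : 0 ≤ u z + t * (w z - u z) := by nlinarith [ht.1, ht.2]
  obtain ⟨ht0, -⟩ := ht
  simp only [Pi.add_apply, Pi.smul_apply, Pi.sub_apply, smul_eq_mul]
  rw [← ENNReal.ofReal_mul ht0, ← ENNReal.ofReal_mul ht0,
    ← ENNReal.ofReal_add hK (by positivity), ← ENNReal.ofReal_add (by positivity) (by positivity)]
  congr 1; ring

lemma marginalCost_add_premium_le_of_quadGap_ne_top (ha : 0 ≤ a)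
    (hν : premium ν θ (fun z => z) < ⊤) (hu : u ∈ Adm) (hw : w ∈ Adm)
    (hmin : IsMinOn (Jfun μ ν θ a) Adm u) (hgap : quadGap μ a u w ≠ ⊤) :
    marginalCost μ a u u + premium ν θ w ≤ marginalCost μ a u w + premium ν θ u := by
  have hfin : quadCost μ a u + premium ν θ u ≠ ⊤ :=
    ENNReal.add_ne_top.2 ⟨quadCost_ne_top_of_isMinOn hν hu hmin, premium_ne_top hν hu⟩
  refine ENNReal.le_of_forall_mul_le_mul_add_sq_mul hgap fun t ht => ?_
  have ht' : t ∈ Icc (0 : ℝ) 1 := Ioc_subset_Icc_self ht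
  have hK := convex_Adm.add_smul_sub_mem hu hw ht'
  have hJ := (Jfun_le_Jfun_iff hν hu hK).1 (isMinOn_iff.1 hmin _ hK)
  rw [← ENNReal.add_le_add_iff_left hfin]
  calc quadCost μ a u + premium ν θ u
        + ENNReal.ofReal t * (marginalCost μ a u u + premium ν θ w)
      = quadCost μ a u + (premium ν θ u + ENNReal.ofReal t * premium ν θ w)
          + ENNReal.ofReal t * marginalCost μ a u u := by ring
    _ = quadCost μ a u + premium ν θ (u + t • (w - u)) + ENNReal.ofReal t * premium ν θ u
          + ENNReal.ofReal t * marginalCost μ a u u := by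
      rw [← premium_add_smul_sub hu hw ht']; ring
    _ ≤ quadCost μ a (u + t • (w - u)) + premium ν θ u + ENNReal.ofReal t * premium ν θ u
          + ENNReal.ofReal t * marginalCost μ a u u := by gcongr
    _ = (quadCost μ a (u + t • (w - u)) + ENNReal.ofReal t * marginalCost μ a u u)
          + (premium ν θ u + ENNReal.ofReal t * premium ν θ u) := by ring
    _ = quadCost μ a u + premium ν θ u + (ENNReal.ofReal t * (marginalCost μ a u w + premium ν θ u)
          + ENNReal.ofReal t ^ 2 * quadGap μ a u w) := by
      rw [quadCost_add_smul_sub ha hu hw ht']; ring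

lemma quadGap_min_ne_top (ha : 0 ≤ a) (hu : u ∈ Adm) (hS : quadCost μ a u ≠ ⊤) (hw : w ∈ Adm)
    (hw1 : ∫⁻ z in Ioi 0, ENNReal.ofReal (w z) ∂μ ≠ ⊤) {n : ℝ} (hn : 0 ≤ n) :
    quadGap μ a u (fun z => min (w z) n) ≠ ⊤ := by
  have hmw := Adm.aemeasurable hw μ
  refine ne_top_of_le_ne_top
    (b := ENNReal.ofReal (a / 2 * n) * ∫⁻ z in Ioi 0, ENNReal.ofReal (w z) ∂μ + quadCost μ a u) (ENNReal.add_ne_top.2 ⟨ENNReal.mul_ne_top ENNReal.ofReal_ne_top hw1, hS⟩) ?_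
  rw [← lintegral_const_mul' _ _ ENNReal.ofReal_ne_top, quadCost,
    ← lintegral_add_left' (by fun_prop)]
  refine setLIntegral_mono' measurableSet_Ioi fun z hz => ?_
  have hu0 := Adm.nonneg hu (le_of_lt hz)
  have hw0 := Adm.nonneg hw (le_of_lt hz)
  have hm0 : 0 ≤ min (w z) n := le_min hw0 hn
  have hsq : (min (w z) n - u z) ^ 2 ≤ n * w z + u z ^ 2 := by
    nlinarith [mul_le_mul (min_le_right (w z) n) (min_le_left (w z) n) hm0 hn, mul_nonneg hm0 hu0]
  rw [← ENNReal.ofReal_mul (by positivity), ← ENNReal.ofReal_add (by positivity) (by positivity)]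
  refine ENNReal.ofReal_le_ofReal ?_
  nlinarith [mul_le_mul_of_nonneg_left hsq (by positivity : 0 ≤ a / 2)]

lemma tendsto_premium_min (hw : w ∈ Adm) :
    Tendsto (fun n : ℕ => premium ν θ (fun z => min (w z) n)) atTop (𝓝 (premium ν θ w)) := by
  have hmw := Adm.aemeasurable hw ν
  refine ENNReal.Tendsto.const_mul (lintegral_tendsto_of_tendsto_of_monotone (fun n => by fun_prop)
    (ae_of_all _ fun z m n hmn => ?_) (ae_of_all _ fun z => ?_)) (.inr ENNReal.ofReal_ne_top)
  · exact ENNReal.ofReal_le_ofReal (min_le_min_left _ (Nat.cast_le.2 hmn))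
  · refine tendsto_atTop_of_eventually_const (i₀ := ⌈w z⌉₊) fun n hn => ?_
    exact congrArg ENNReal.ofReal (min_eq_left ((Nat.le_ceil _).trans (Nat.cast_le.2 hn)))

lemma marginalCost_mono (ha : 0 ≤ a) (hu : u ∈ Adm) {w₁ w₂ : ℝ → ℝ}
    (h : ∀ z ∈ Ioi (0 : ℝ), w₁ z ≤ w₂ z) : marginalCost μ a u w₁ ≤ marginalCost μ a u w₂ :=
  setLIntegral_mono' measurableSet_Ioi fun z hz =>
    have := Adm.nonneg hu (le_of_lt hz)
    ENNReal.ofReal_le_ofReal (mul_le_mul_of_nonneg_right (h z hz) (by positivity))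

lemma IsMinOn.marginalCost_add_premium_le (ha : 0 ≤ a) (hν : premium ν θ (fun z => z) < ⊤)
    (hu : u ∈ Adm) (hmin : IsMinOn (Jfun μ ν θ a) Adm u) (hw : w ∈ Adm) :
    marginalCost μ a u u + premium ν θ w ≤ marginalCost μ a u w + premium ν θ u := by
  rcases eq_or_ne (marginalCost μ a u w) ⊤ with hT | hT
  · simp [hT]
  have hw1 : ∫⁻ z in Ioi 0, ENNReal.ofReal (w z) ∂μ ≠ ⊤ :=
    ne_top_of_le_ne_top hT <| setLIntegral_mono' measurableSet_Ioi fun z hz =>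
      have := Adm.nonneg hu (le_of_lt hz)
      ENNReal.ofReal_le_ofReal (le_mul_of_one_le_right (Adm.nonneg hw (le_of_lt hz)) (by nlinarith))
  have hS := quadCost_ne_top_of_isMinOn hν hu hmin
  refine le_of_tendsto' ((tendsto_premium_min hw).const_add _) fun n => ?_
  exact (marginalCost_add_premium_le_of_quadGap_ne_top ha hν hu (Adm.min_const hw n.cast_nonneg)
    hmin (quadGap_min_ne_top ha hu hS hw hw1 n.cast_nonneg)).trans
    (add_le_add (marginalCost_mono ha hu fun z _ => min_le_left _ _) le_rfl)

end Functional

theorem stmt_9_general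
    (F Fhat : StieltjesFunction ℝ) (θ : ℝ)
    (hfin : ENNReal.ofReal (1 + θ) *
        (∫⁻ z in Set.Ioi (0:ℝ), ENNReal.ofReal z ∂Fhat.measure) < ⊤)
    (astar : ℝ) (hastar_pos : 0 < astar)
    (Hstar : ℝ → ℝ) (hHstar : Hstar ∈ Adm) :
    Jfun F.measure Fhat.measure θ astar Hstar = vfun F.measure Fhat.measure θ astar ↔
      ((∫⁻ z in Set.Ioi (0:ℝ),
          ENNReal.ofReal (Hstar z * (astar * Hstar z + 1)) ∂F.measure) < ⊤ ∧
       ∀ H ∈ Adm,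
        ((∫⁻ z in Set.Ioi (0:ℝ),
            ENNReal.ofReal (Hstar z * (astar * Hstar z + 1)) ∂F.measure : ℝ≥0∞) : EReal)
          - ((ENNReal.ofReal (1 + θ) *
              ∫⁻ z in Set.Ioi (0:ℝ), ENNReal.ofReal (Hstar z) ∂Fhat.measure : ℝ≥0∞) : EReal)
        ≤ ((∫⁻ z in Set.Ioi (0:ℝ),
            ENNReal.ofReal (H z * (astar * Hstar z + 1)) ∂F.measure : ℝ≥0∞) : EReal)
          - ((ENNReal.ofReal (1 + θ) *
              ∫⁻ z in Set.Ioi (0:ℝ), ENNReal.ofReal (H z) ∂Fhat.measure : ℝ≥0∞) : EReal)) := by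
  have hvi_iff := fun H (hH : H ∈ Adm) => EReal.coe_ennreal_sub_le_coe_ennreal_sub_iff
    (a := marginalCost F.measure astar Hstar Hstar) (c := marginalCost F.measure astar Hstar H)
    (premium_ne_top hfin hHstar) (premium_ne_top hfin hH)
  rw [Jfun_eq_vfun_iff hHstar]
  constructor
  · intro hmin
    have hS := quadCost_ne_top_of_isMinOn hfin hHstar hmin
    refine ⟨(marginalCost_self_le hHstar).trans_lt (ENNReal.mul_lt_top (by norm_num) hS.lt_top),
      fun H hH => (hvi_iff H hH).2 ?_⟩
    exact hmin.marginalCost_add_premium_le hastar_pos.le hfin hHstar hH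
  · rintro ⟨hT, hvi⟩
    exact isMinOn_of_marginalCost_add_premium_le hastar_pos.le hfin hHstar hT.ne
      fun H hH => (hvi_iff H hH).1 (hvi H hH)

/-- Optimality condition I: H* ∈ 𝒜 is optimal iff the variational
inequality holds for all H ∈ 𝒜, the right-hand side being finite. -/
theorem stmt_9
    (F Fhat : StieltjesFunction ℝ) (g : ℝ → ℝ) (θ0 θ : ℝ)
    (hF_neg : ∀ z : ℝ, z < 0 → F z = 0)
    (hF_top : Tendsto (fun z => F z) atTop (nhds 1))
    (hg_mono : MonotoneOn g (Set.Icc 0 1))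
    (hg_left : ∀ p ∈ Set.Ioc (0:ℝ) 1, Tendsto g (nhdsWithin p (Set.Iio p)) (nhds (g p)))
    (hg_zero : g 0 = 0)
    (hg_zero' : Tendsto g (nhdsWithin 0 (Set.Ioi 0)) (nhds 0))
    (hg_one : g 1 = 1)
    (hg_pos : 0 < g (1 - F 0))
    (hθ0 : -1 < θ0)
    (hθ : θ = (1 + θ0) * g (1 - F 0) - 1)
    (hFhat : ∀ z : ℝ, Fhat z = if z < 0 then 0 else 1 - g (1 - F z) / g (1 - F 0))
    (hFhat_top : Tendsto (fun z => Fhat z) atTop (nhds 1))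
    (prem : ℝ) (hprem_pos : 0 < prem)
    (hEZ_pos : 0 < ∫⁻ z in Set.Ioi (0:ℝ), ENNReal.ofReal z ∂F.measure)
    (hEZ_lt : (∫⁻ z in Set.Ioi (0:ℝ), ENNReal.ofReal z ∂F.measure) < ENNReal.ofReal prem)
    (hprem_lt : ENNReal.ofReal prem <
        ENNReal.ofReal (1 + θ) * ∫⁻ z in Set.Ioi (0:ℝ), ENNReal.ofReal z ∂Fhat.measure)
    (hfin : ENNReal.ofReal (1 + θ) *
        (∫⁻ z in Set.Ioi (0:ℝ), ENNReal.ofReal z ∂Fhat.measure) < ⊤)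
    (astar : ℝ) (hastar_pos : 0 < astar)
    (hastar : vfun F.measure Fhat.measure θ astar =
        ((prem - (ENNReal.ofReal (1 + θ) *
          (∫⁻ z in Set.Ioi (0:ℝ), ENNReal.ofReal z ∂Fhat.measure)).toReal : ℝ) : EReal))
    (Hstar : ℝ → ℝ) (hHstar : Hstar ∈ Adm) :
    Jfun F.measure Fhat.measure θ astar Hstar = vfun F.measure Fhat.measure θ astar ↔
      ((∫⁻ z in Set.Ioi (0:ℝ),
          ENNReal.ofReal (Hstar z * (astar * Hstar z + 1)) ∂F.measure) < ⊤ ∧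
       ∀ H ∈ Adm,
        ((∫⁻ z in Set.Ioi (0:ℝ),
            ENNReal.ofReal (Hstar z * (astar * Hstar z + 1)) ∂F.measure : ℝ≥0∞) : EReal)
          - ((ENNReal.ofReal (1 + θ) *
              ∫⁻ z in Set.Ioi (0:ℝ), ENNReal.ofReal (Hstar z) ∂Fhat.measure : ℝ≥0∞) : EReal)
        ≤ ((∫⁻ z in Set.Ioi (0:ℝ),
            ENNReal.ofReal (H z * (astar * Hstar z + 1)) ∂F.measure : ℝ≥0∞) : EReal)
          - ((ENNReal.ofReal (1 + θ) *
              ∫⁻ z in Set.Ioi (0:ℝ), ENNReal.ofReal (H z) ∂Fhat.measure : ℝ≥0∞) : EReal)) :=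
  stmt_9_general F Fhat θ hfin astar hastar_pos Hstar hHstar
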